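/- There exists an absolute constant c > 0 such that the following holds. Let G = (V,E) be a finite connected simple graph, let K₁,…,K_ℓ ⊆ V be sets of terminals each of even size with k = Σ_{i=1}^ℓ |K_i| ≥ 2, and for each i let M_i be a perfect matching of K_i with d(G,M_i) ≥ (1/2)·σ_{K_i}(G). For each j ∈ {1,…,ℓ} and each cut C, let b^j(C) be the number of pairs of M_j separated by C. Then c·(Σ_{i=1}^ℓ σ_{K_i}(G)) / log₂ k ≤ LP^L(G) ≤ LP^U(G) ≤ Σ_{i=1}^ℓ σ_{K_i}(G). -/

import Mathlib

open Finset
open scoped Classical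

variable {V : Type} [Fintype V] [DecidableEq V]

/-- A cut of a graph on vertex set `V`: a nonempty proper subset of the vertices. -/
def IsCut (C : Finset V) : Prop := C.Nonempty ∧ C ≠ Finset.univ

/-- The unordered pair `e` crosses the cut `C`: exactly one of its endpoints lies in `C`. -/
def Crosses (C : Finset V) (e : Sym2 V) : Prop :=
  ∃ u v, e = s(u, v) ∧ u ∈ C ∧ v ∉ C

/-- `δ(C)`: the edges of `G` with exactly one endpoint in `C`. -/
noncomputable def cutEdges (G : SimpleGraph V) (C : Finset V) : Finset (Sym2 V) :=
  G.edgeFinset.filter (Crosses C)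

/-- The optimum value of `LP^L(G)`: minimize `∑_{e∈E} x_e` subject to
`∑_{e∈δ(C)} x_e ≥ ∑_i b^i(C)` for every cut `C`, `x ≥ 0`. -/
noncomputable def LPL (G : SimpleGraph V) (ℓ : ℕ) (b : Fin ℓ → Finset V → ℝ) : ℝ :=
  sInf { y | ∃ x : Sym2 V → ℝ, (∀ e, 0 ≤ x e) ∧
    (∀ C : Finset V, IsCut C → ∑ i, b i C ≤ ∑ e ∈ cutEdges G C, x e) ∧
    y = ∑ e ∈ G.edgeFinset, x e }

/-- The optimum value of `LP^U(G)`: minimize `∑_i ∑_{e∈E} x_{i,e}` subject to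
`∑_{e∈δ(C)} x_{i,e} ≥ b^i(C)` for every cut `C` and every `i`, `x ≥ 0`. -/
noncomputable def LPU (G : SimpleGraph V) (ℓ : ℕ) (b : Fin ℓ → Finset V → ℝ) : ℝ :=
  sInf { y | ∃ x : Fin ℓ → Sym2 V → ℝ, (∀ i e, 0 ≤ x i e) ∧
    (∀ (i : Fin ℓ) (C : Finset V), IsCut C → b i C ≤ ∑ e ∈ cutEdges G C, x i e) ∧
    y = ∑ i, ∑ e ∈ G.edgeFinset, x i e }

/-- The cut values `b` satisfy the sub-additive property. -/
def SubAdd (ℓ : ℕ) (b : Fin ℓ → Finset V → ℝ) : Prop :=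
  ∀ (i : Fin ℓ) (C₁ C₂ : Finset V), IsCut C₁ → IsCut C₂ → IsCut (C₁ ∪ C₂) →
    b i (C₁ ∪ C₂) ≤ b i C₁ + b i C₂

/-- The cut values `b` are nonnegative on cuts. -/
def CutNonneg (ℓ : ℕ) (b : Fin ℓ → Finset V → ℝ) : Prop :=
  ∀ (i : Fin ℓ) (C : Finset V), IsCut C → 0 ≤ b i C

/-- `σ_K(G) = min_{v∈V} ∑_{w∈K} d_G(v,w)`: the 1-median cost of `K` in `G`. -/
noncomputable def sigmaK (G : SimpleGraph V) (K : Finset V) : ℕ :=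
  sInf { n | ∃ v : V, n = ∑ w ∈ K, G.dist v w }

/-- `M` is a perfect matching of `K`: a collection of disjoint unordered pairs of distinct
vertices partitioning `K`. -/
def IsPerfectMatchingOn (K : Finset V) (M : Finset (Sym2 V)) : Prop :=
  (∀ p ∈ M, ¬ p.IsDiag) ∧
  (∀ v ∈ K, ∃! p, p ∈ M ∧ v ∈ p) ∧
  (∀ p ∈ M, ∀ v ∈ p, v ∈ K)

/-- `d(G,M) = ∑_{{u,v}∈M} d_G(u,v)`. -/
noncomputable def matchCost (G : SimpleGraph V) (M : Finset (Sym2 V)) : ℕ :=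
  ∑ p ∈ M, Sym2.lift ⟨fun u v => G.dist u v, fun _ _ => SimpleGraph.dist_comm⟩ p


/-!
The upper bounds are routing arguments. Summing a feasible `LP^U` solution over the commodities
gives a feasible `LP^L` solution, and routing every terminal of `K_i` to a median of `K_i` along
shortest paths crosses every cut `C` at least `b^i(C)` times at total cost `σ_{K_i}(G)`.

For the lower bound, fix a feasible `x` and cut with random balls: at scale `i` keep each terminal
independently with probability `2^-(i+2)` and cut along the ball of every radius `r` around the
kept set. Nested ball cuts cross each edge at most once, so by feasibility one scale costs at most
`∑ x_e`. For a matched pair `{a, b}` at distance `d`, the least radius at which the balls around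
both `a` and `b` contain `2^i` terminals grows from `0` past `d/2` as `i` runs through the
`log₂ k + 1` scales, and at scale `i` each radius within the increment separates `a` from `b` with
probability at least `1/10`. Summed over the scales, the pair is separated at least `d/30` times
in expectation, whence `∑_j d(G,M_j) ≤ 60 log₂ k ∑ x_e`; finally `σ_{K_j}(G) ≤ 2 d(G,M_j)`.
-/

open SimpleGraph

set_option linter.unusedSectionVars false

section LinearPrograms

def IsLPLFeasible (G : SimpleGraph V) (ℓ : ℕ) (b : Fin ℓ → Finset V → ℝ) (x : Sym2 V → ℝ) :
    Prop :=
  (∀ e, 0 ≤ x e) ∧ ∀ C : Finset V, IsCut C → ∑ i, b i C ≤ ∑ e ∈ cutEdges G C, x e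

def IsLPUFeasible (G : SimpleGraph V) (ℓ : ℕ) (b : Fin ℓ → Finset V → ℝ)
    (x : Fin ℓ → Sym2 V → ℝ) : Prop :=
  (∀ i e, 0 ≤ x i e) ∧ ∀ (i : Fin ℓ) (C : Finset V), IsCut C → b i C ≤ ∑ e ∈ cutEdges G C, x i e

variable {G : SimpleGraph V} {ℓ : ℕ} {b : Fin ℓ → Finset V → ℝ}

theorem IsLPUFeasible.sum {x : Fin ℓ → Sym2 V → ℝ} (hx : IsLPUFeasible G ℓ b x) :
    IsLPLFeasible G ℓ b (fun e => ∑ i, x i e) :=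
  ⟨fun e => sum_nonneg fun i _ => hx.1 i e, fun C hC =>
    (sum_le_sum fun i _ => hx.2 i C hC).trans_eq sum_comm⟩

theorem LPU_le {x : Fin ℓ → Sym2 V → ℝ} (hx : IsLPUFeasible G ℓ b x) :
    LPU G ℓ b ≤ ∑ i, ∑ e ∈ G.edgeFinset, x i e := by
  refine csInf_le ⟨0, ?_⟩ ⟨x, hx.1, hx.2, rfl⟩
  rintro _ ⟨y, hy0, -, rfl⟩
  exact sum_nonneg fun i _ => sum_nonneg fun e _ => hy0 i e

theorem LPL_le_LPU {x : Fin ℓ → Sym2 V → ℝ} (hx : IsLPUFeasible G ℓ b x) :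
    LPL G ℓ b ≤ LPU G ℓ b := by
  refine csInf_le_csInf ⟨0, ?_⟩ ⟨_, x, hx.1, hx.2, rfl⟩ ?_
  · rintro _ ⟨y, hy0, -, rfl⟩
    exact sum_nonneg fun e _ => hy0 e
  · rintro _ ⟨y, hy0, hy, rfl⟩
    obtain ⟨hsum0, hsum⟩ := IsLPUFeasible.sum ⟨hy0, hy⟩
    exact ⟨_, hsum0, hsum, sum_comm⟩

theorem le_LPL {x₀ : Sym2 V → ℝ} (hx₀ : IsLPLFeasible G ℓ b x₀) {y : ℝ}
    (h : ∀ x, IsLPLFeasible G ℓ b x → y ≤ ∑ e ∈ G.edgeFinset, x e) : y ≤ LPL G ℓ b :=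
  le_csInf ⟨_, x₀, hx₀.1, hx₀.2, rfl⟩ (by rintro _ ⟨x, hx0, hx, rfl⟩; exact h x ⟨hx0, hx⟩)

end LinearPrograms

section Crossing

variable {C : Finset V}

theorem crosses_mk_iff {u v : V} : Crosses C s(u, v) ↔ ¬(u ∈ C ↔ v ∈ C) := by
  constructor
  · rintro ⟨a, b, hab, ha, hb⟩
    rcases Sym2.eq_iff.1 hab with ⟨rfl, rfl⟩ | ⟨rfl, rfl⟩ <;> tauto
  · intro h
    by_cases hu : u ∈ C
    · exact ⟨u, v, rfl, hu, by tauto⟩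
    · exact ⟨v, u, Sym2.eq_swap, by tauto, hu⟩

theorem IsCut.of_crosses {e : Sym2 V} (h : Crosses C e) : IsCut C := by
  obtain ⟨u, v, -, hu, hv⟩ := h
  exact ⟨⟨u, hu⟩, fun hC => hv (hC ▸ mem_univ v)⟩

theorem SimpleGraph.Walk.exists_mem_edges_mem_cutEdges {G : SimpleGraph V} {u v : V}
    (W : G.Walk u v) (h : ¬(u ∈ C ↔ v ∈ C)) : ∃ e ∈ W.edges, e ∈ cutEdges G C := by
  induction W with
  | nil => exact absurd Iff.rfl h
  | @cons a b c hab W ih =>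
    by_cases hb : b ∈ C ↔ c ∈ C
    · refine ⟨s(a, b), by simp, ?_⟩
      rw [cutEdges, mem_filter, mem_edgeFinset, crosses_mk_iff]
      exact ⟨hab, by tauto⟩
    · obtain ⟨e, he, heC⟩ := ih hb
      exact ⟨e, by simp [he], heC⟩

end Crossing

section UpperBound

variable {G : SimpleGraph V} {K : Finset V} {M : Finset (Sym2 V)}

theorem card_filter_crosses_le_card_filter (hM : IsPerfectMatchingOn K M) (C : Finset V)
    (v₀ : V) : #(M.filter (Crosses C)) ≤ #(K.filter fun w => ¬(w ∈ C ↔ v₀ ∈ C)) := by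
  refine card_le_card_of_forall_subsingleton (fun p w => w ∈ p) ?_ ?_
  · rintro p hp
    obtain ⟨hpM, a, b, rfl, ha, hb⟩ := mem_filter.1 hp
    by_cases h₀ : v₀ ∈ C
    · exact ⟨b, mem_filter.2 ⟨hM.2.2 _ hpM b (Sym2.mem_mk_right a b), by tauto⟩,
        Sym2.mem_mk_right a b⟩
    · exact ⟨a, mem_filter.2 ⟨hM.2.2 _ hpM a (Sym2.mem_mk_left a b), by tauto⟩,
        Sym2.mem_mk_left a b⟩
  · intro w hw p hp q hq
    exact (hM.2.1 w (mem_filter.1 hw).1).unique ⟨(mem_filter.1 hp.1).1, hp.2⟩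
      ⟨(mem_filter.1 hq.1).1, hq.2⟩

theorem exists_sigmaK_eq [Nonempty V] (K : Finset V) :
    ∃ v, sigmaK G K = ∑ w ∈ K, G.dist v w :=
  Nat.sInf_mem (s := {n | ∃ v, n = ∑ w ∈ K, G.dist v w}) ⟨_, Classical.arbitrary V, rfl⟩

theorem exists_crossing_cover_eq_sigmaK (hG : G.Connected) (hM : IsPerfectMatchingOn K M) :
    ∃ x : Sym2 V → ℝ, (∀ e, 0 ≤ x e) ∧
      (∀ C, (#(M.filter (Crosses C)) : ℝ) ≤ ∑ e ∈ cutEdges G C, x e) ∧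
      ∑ e ∈ G.edgeFinset, x e = sigmaK G K := by
  have := hG.nonempty
  obtain ⟨v₀, hv₀⟩ := exists_sigmaK_eq (G := G) K
  choose W hW using fun w => hG.exists_walk_length_eq_dist v₀ w
  refine ⟨fun e => ((∑ w ∈ K, (W w).edges.count e : ℕ) : ℝ), fun e => by positivity,
    fun C => ?_, ?_⟩
  · have hcover : #(K.filter fun w => ¬(w ∈ C ↔ v₀ ∈ C)) ≤
        ∑ e ∈ cutEdges G C, ∑ w ∈ K, (W w).edges.count e := by
      rw [sum_comm, card_eq_sum_ones]
      refine (sum_le_sum fun w hw => ?_).trans (sum_le_sum_of_subset (filter_subset _ K))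
      obtain ⟨e, he, heC⟩ := (W w).exists_mem_edges_mem_cutEdges (C := C) (by
        have := (mem_filter.1 hw).2; tauto)
      exact single_le_sum (f := fun e => (W w).edges.count e) (fun _ _ => Nat.zero_le _) heC
        |>.trans' (List.count_pos_iff.2 he)
    have := (card_filter_crosses_le_card_filter hM C v₀).trans hcover
    simp only [← Nat.cast_sum]
    exact_mod_cast this
  · have hlen : ∀ w, ∑ e ∈ G.edgeFinset, (W w).edges.count e = G.dist v₀ w := fun w => by
      rw [← hW, ← Walk.length_edges, ← List.sum_toFinset_count_eq_length]
      refine (sum_subset (fun e he => mem_edgeFinset.2 ((W w).edges_subset_edgeSet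
        (List.mem_toFinset.1 he))) fun e _ he => ?_).symm
      rwa [List.count_eq_zero, ← List.mem_toFinset]
    rw [hv₀, ← sum_congr rfl fun w _ => hlen w, sum_comm]
    push_cast
    rfl

theorem exists_isLPUFeasible (hG : G.Connected) {ℓ : ℕ} {K : Fin ℓ → Finset V}
    {M : Fin ℓ → Finset (Sym2 V)} (hM : ∀ i, IsPerfectMatchingOn (K i) (M i)) :
    ∃ x, IsLPUFeasible G ℓ (fun j C => (#((M j).filter (Crosses C)) : ℝ)) x ∧
      ∑ i, ∑ e ∈ G.edgeFinset, x i e = ∑ i, (sigmaK G (K i) : ℝ) := by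
  choose x hx0 hx hsum using fun i => exists_crossing_cover_eq_sigmaK hG (hM i)
  exact ⟨x, ⟨hx0, fun i C _ => hx i C⟩, sum_congr rfl fun i _ => hsum i⟩

end UpperBound

section BernoulliWeight

variable {α : Type*}

/-- The probability that a `p`-random subset of `T` (each element kept independently with
probability `p`) equals `S`. -/
noncomputable def bernoulliWeight (T : Finset α) (p : ℝ) (S : Finset α) : ℝ :=
  p ^ #S * (1 - p) ^ (#T - #S)

variable {T : Finset α} {p : ℝ}

theorem bernoulliWeight_nonneg (hp₀ : 0 ≤ p) (hp₁ : p ≤ 1) (S : Finset α) :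
    0 ≤ bernoulliWeight T p S :=
  mul_nonneg (pow_nonneg hp₀ _) (pow_nonneg (sub_nonneg.2 hp₁) _)

theorem sum_bernoulliWeight (T : Finset α) (p : ℝ) :
    ∑ S ∈ T.powerset, bernoulliWeight T p S = 1 := by
  simp only [bernoulliWeight, sum_pow_mul_eq_add_pow, add_sub_cancel, one_pow]

theorem sum_bernoulliWeight_disjoint [DecidableEq α] {X : Finset α} (hX : X ⊆ T) :
    ∑ S ∈ T.powerset.filter (Disjoint · X), bernoulliWeight T p S = (1 - p) ^ #X := by
  have hidx : T.powerset.filter (Disjoint · X) = (T \ X).powerset := by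
    ext S
    simp only [mem_filter, mem_powerset, subset_sdiff]
  have hcard : #(T \ X) + #X = #T := card_sdiff_add_card_eq_card hX
  rw [hidx]
  calc ∑ S ∈ (T \ X).powerset, bernoulliWeight T p S
      = ∑ S ∈ (T \ X).powerset, (1 - p) ^ #X * bernoulliWeight (T \ X) p S := by
        refine sum_congr rfl fun S hS => ?_
        have := card_le_card (mem_powerset.1 hS)
        rw [bernoulliWeight, bernoulliWeight, show #T - #S = #(T \ X) - #S + #X by omega,
          pow_add]
        ring
    _ = (1 - p) ^ #X := by rw [← mul_sum, sum_bernoulliWeight, mul_one]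

theorem sum_bernoulliWeight_hit_miss [DecidableEq α] {A B : Finset α} (hA : A ⊆ T) (hB : B ⊆ T)
    (hAB : Disjoint A B) :
    ∑ S ∈ T.powerset.filter (fun S => ¬Disjoint S A ∧ Disjoint S B), bernoulliWeight T p S =
      (1 - p) ^ #B - (1 - p) ^ (#A + #B) := by
  have hsplit := sum_filter_add_sum_filter_not (T.powerset.filter (Disjoint · B))
    (fun S => ¬Disjoint S A) (bernoulliWeight T p)
  simp only [filter_filter, not_not, ← disjoint_union_right] at hsplit
  rw [sum_bernoulliWeight_disjoint hB, sum_bernoulliWeight_disjoint (union_subset hB hA),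
    card_union_of_disjoint hAB.symm, add_comm #B] at hsplit
  rw [← hsplit, add_sub_cancel_right]
  exact sum_congr (filter_congr fun S _ => and_comm) fun _ _ => rfl

end BernoulliWeight

theorem one_tenth_le_one_sub_pow_sub_pow {p : ℝ} (hp₀ : 0 ≤ p) (hp₁ : p ≤ 1) {a b : ℕ}
    (ha : 1 / 4 ≤ a * p) (hb : b * p ≤ 1 / 2) :
    1 / 10 ≤ (1 - p) ^ b - (1 - p) ^ (a + b) := by
  have hmiss : 1 / 2 ≤ (1 - p) ^ b := by
    have := one_add_mul_le_pow (a := -p) (by linarith) b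
    rw [← sub_eq_add_neg] at this
    linarith
  -- `(1 - p)^a (1 + a p) ≤ (1 - p)^a (1 + p)^a = (1 - p^2)^a ≤ 1`
  have hhit : (1 - p) ^ a ≤ 4 / 5 := by
    have hsq : (1 - p) ^ a * (1 + p) ^ a ≤ 1 := by
      rw [← mul_pow]
      exact pow_le_one₀ (by nlinarith) (by nlinarith)
    have := mul_le_mul_of_nonneg_left (one_add_mul_le_pow (a := p) (by linarith) a)
      (pow_nonneg (sub_nonneg.2 hp₁) a)
    nlinarith
  rw [pow_add]
  nlinarith

noncomputable def levelProb (i : ℕ) : ℝ := (2 ^ (i + 2))⁻¹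

theorem levelProb_nonneg (i : ℕ) : 0 ≤ levelProb i := by
  unfold levelProb; positivity

theorem levelProb_le_one (i : ℕ) : levelProb i ≤ 1 :=
  inv_le_one_of_one_le₀ (one_le_pow₀ one_le_two)

theorem one_tenth_le_levelProb_hit_miss {i a b : ℕ} (ha : 2 ^ i ≤ a) (hb : b < 2 ^ (i + 1)) :
    1 / 10 ≤ (1 - levelProb i) ^ b - (1 - levelProb i) ^ (a + b) := by
  have h : (2 : ℝ) ^ i * levelProb i = 1 / 4 := by
    rw [levelProb, pow_add]; field_simp; norm_num
  refine one_tenth_le_one_sub_pow_sub_pow (levelProb_nonneg i) (levelProb_le_one i) ?_ ?_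
  · rw [← h]
    gcongr
    · exact levelProb_nonneg i
    · exact_mod_cast ha
  · have hb' : (b : ℝ) ≤ 2 ^ i * 2 := by exact_mod_cast (pow_succ 2 i ▸ hb.le)
    nlinarith [levelProb_nonneg i]

section BallCuts

variable {G : SimpleGraph V}

noncomputable def ballCut (G : SimpleGraph V) (S : Finset V) (r : ℕ) : Finset V :=
  univ.filter fun v => ∃ s ∈ S, G.dist v s ≤ r

@[simp]
theorem mem_ballCut {S : Finset V} {r : ℕ} {v : V} :
    v ∈ ballCut G S r ↔ ∃ s ∈ S, G.dist v s ≤ r := by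
  simp [ballCut]

theorem succ_mem_ballCut_of_adj (hG : G.Connected) {S : Finset V} {r : ℕ} {u v : V}
    (huv : G.Adj u v) (hv : v ∈ ballCut G S r) : u ∈ ballCut G S (r + 1) := by
  obtain ⟨s, hs, hvs⟩ := mem_ballCut.1 hv
  have := hG.dist_triangle (u := u) (v := v) (w := s)
  rw [dist_eq_one_iff_adj.2 huv] at this
  exact mem_ballCut.2 ⟨s, hs, by omega⟩

theorem ballCut_mono {S : Finset V} {r r' : ℕ} (h : r ≤ r') : ballCut G S r ⊆ ballCut G S r' :=
  fun v hv => by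
    obtain ⟨s, hs, hvs⟩ := mem_ballCut.1 hv
    exact mem_ballCut.2 ⟨s, hs, hvs.trans h⟩

theorem not_crosses_ballCut_of_lt (hG : G.Connected) {S : Finset V} {r₁ r₂ : ℕ} {u v : V}
    (huv : G.Adj u v) (hr : r₁ < r₂) (h : Crosses (ballCut G S r₁) s(u, v)) :
    ¬Crosses (ballCut G S r₂) s(u, v) := by
  rw [crosses_mk_iff] at h ⊢
  have hmono := ballCut_mono (G := G) (S := S) hr.le
  have hsucc := ballCut_mono (G := G) (S := S) (Nat.succ_le_of_lt hr)
  by_cases hu : u ∈ ballCut G S r₁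
  · have := hsucc (succ_mem_ballCut_of_adj hG huv.symm hu)
    have := hmono hu
    tauto
  · have hv : v ∈ ballCut G S r₁ := by tauto
    have := hsucc (succ_mem_ballCut_of_adj hG huv hv)
    have := hmono hv
    tauto

noncomputable def sepCount (G : SimpleGraph V) (S : Finset V) (R : ℕ) (e : Sym2 V) : ℕ :=
  #((range R).filter fun r => Crosses (ballCut G S r) e)

theorem sepCount_le_one (hG : G.Connected) (S : Finset V) (R : ℕ) {e : Sym2 V}
    (he : e ∈ G.edgeFinset) : sepCount G S R e ≤ 1 := by
  induction e using Sym2.ind with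
  | _ u v =>
  have huv : G.Adj u v := mem_edgeFinset.1 he
  refine card_le_one.2 fun r₁ h₁ r₂ h₂ => ?_
  rw [mem_filter] at h₁ h₂
  rcases lt_trichotomy r₁ r₂ with h | h | h
  · exact absurd h₂.2 (not_crosses_ballCut_of_lt hG huv h h₁.2)
  · exact h
  · exact absurd h₁.2 (not_crosses_ballCut_of_lt hG huv h h₂.2)

theorem le_sepCount {S : Finset V} {R ρ' ρ : ℕ} {t ω' ω : V} (hρR : ρ ≤ R) (ht : t ∈ S)
    (hω't : G.dist ω' t ≤ ρ') (hω : ∀ s ∈ S, ρ ≤ G.dist ω s) :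
    ρ - ρ' ≤ sepCount G S R s(ω', ω) := by
  rw [← Nat.card_Ico]
  refine card_le_card fun r hr => ?_
  rw [mem_Ico] at hr
  refine mem_filter.2 ⟨mem_range.2 (by omega), crosses_mk_iff.2 fun h => ?_⟩
  obtain ⟨s, hs, hωs⟩ := mem_ballCut.1 (h.1 (mem_ballCut.2 ⟨t, ht, by omega⟩))
  exact absurd (hω s hs) (by omega)

end BallCuts

section RandomBallCuts

variable {G : SimpleGraph V}

/-- The expected number of radii `r < R` at which the ball cut around a `p`-random subset of
`T` separates `e`. -/
noncomputable def expectedSep (G : SimpleGraph V) (T : Finset V) (p : ℝ) (R : ℕ)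
    (e : Sym2 V) : ℝ :=
  ∑ S ∈ T.powerset, bernoulliWeight T p S * sepCount G S R e

noncomputable def terminalBall (G : SimpleGraph V) (T : Finset V) (x : V) (ρ : ℕ) : Finset V :=
  T.filter fun t => G.dist x t ≤ ρ

variable {T : Finset V} {p : ℝ} {R : ℕ} {e : Sym2 V}

theorem expectedSep_nonneg (hp₀ : 0 ≤ p) (hp₁ : p ≤ 1) : 0 ≤ expectedSep G T p R e :=
  sum_nonneg fun S _ => mul_nonneg (bernoulliWeight_nonneg hp₀ hp₁ S) (Nat.cast_nonneg _)

theorem le_expectedSep_of_hit_miss {A B : Finset V} (hA : A ⊆ T) (hB : B ⊆ T)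
    (hAB : Disjoint A B) (hp₀ : 0 ≤ p) (hp₁ : p ≤ 1) {n : ℕ}
    (h : ∀ S ⊆ T, ¬Disjoint S A → Disjoint S B → n ≤ sepCount G S R e) :
    ((1 - p) ^ #B - (1 - p) ^ (#A + #B)) * n ≤ expectedSep G T p R e := by
  rw [← sum_bernoulliWeight_hit_miss hA hB hAB, sum_mul]
  refine (sum_le_sum fun S hS => ?_).trans
    (sum_le_sum_of_subset_of_nonneg (filter_subset _ _) fun S _ _ =>
      mul_nonneg (bernoulliWeight_nonneg hp₀ hp₁ S) (Nat.cast_nonneg _))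
  obtain ⟨hST, hSA, hSB⟩ := mem_filter.1 hS
  exact mul_le_mul_of_nonneg_left (by exact_mod_cast h S (mem_powerset.1 hST) hSA hSB)
    (bernoulliWeight_nonneg hp₀ hp₁ S)

/-- With probability at least `1/10` a `levelProb i`-random subset of `T` meets the ball around
`ω'` and avoids the ball around `ω`, and then every radius in `[ρ', ρ)` separates `ω'` from `ω`. -/
theorem le_expectedSep_levelProb (hG : G.Connected) {i ρ' ρ : ℕ} {ω' ω : V} (hρ : ρ' < ρ)
    (hρd : ρ' + ρ ≤ G.dist ω' ω) (hρR : ρ ≤ R) (hA : 2 ^ i ≤ #(terminalBall G T ω' ρ'))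
    (hB : #(terminalBall G T ω (ρ - 1)) < 2 ^ (i + 1)) :
    ((ρ : ℝ) - ρ') / 10 ≤ expectedSep G T (levelProb i) R s(ω', ω) := by
  have hdisj : Disjoint (terminalBall G T ω' ρ') (terminalBall G T ω (ρ - 1)) := by
    refine disjoint_left.2 fun t ht ht' => ?_
    have := hG.dist_triangle (u := ω') (v := t) (w := ω)
    rw [terminalBall, mem_filter] at ht ht'
    rw [dist_comm (u := t)] at this
    omega
  have hsep := le_expectedSep_of_hit_miss (R := R) (e := s(ω', ω)) (filter_subset _ T)
    (filter_subset _ T) hdisj (levelProb_nonneg i) (levelProb_le_one i) (n := ρ - ρ')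
    fun S hST hSA hSB => by
      obtain ⟨t, htS, htA⟩ := not_disjoint_iff.1 hSA
      refine le_sepCount hρR htS (mem_filter.1 htA).2 fun s hs => ?_
      have : s ∉ terminalBall G T ω (ρ - 1) := disjoint_left.1 hSB hs
      rw [terminalBall, mem_filter, not_and, not_le] at this
      have := this (hST hs)
      omega
  rw [Nat.cast_sub hρ.le] at hsep
  have : (ρ' : ℝ) < ρ := by exact_mod_cast hρ
  calc ((ρ : ℝ) - ρ') / 10 = 1 / 10 * (ρ - ρ') := by ring
    _ ≤ _ := mul_le_mul_of_nonneg_right (one_tenth_le_levelProb_hit_miss hA hB) (by linarith)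
    _ ≤ _ := hsep

theorem IsLPLFeasible.sum_card_filter_crosses_le {ℓ : ℕ} {M : Fin ℓ → Finset (Sym2 V)}
    {x : Sym2 V → ℝ} (hx : IsLPLFeasible G ℓ (fun j C => (#((M j).filter (Crosses C)) : ℝ)) x)
    (C : Finset V) : ∑ j, (#((M j).filter (Crosses C)) : ℝ) ≤ ∑ e ∈ cutEdges G C, x e := by
  by_cases hC : IsCut C
  · exact hx.2 C hC
  · have hempty : ∀ j, (M j).filter (Crosses C) = ∅ := fun j =>
      filter_eq_empty_iff.2 fun _ _ h => hC (IsCut.of_crosses h)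
    simp only [hempty, card_empty, Nat.cast_zero, sum_const_zero]
    exact sum_nonneg fun e _ => hx.1 e

theorem sum_sepCount_le (hG : G.Connected) {ℓ : ℕ} {M : Fin ℓ → Finset (Sym2 V)}
    {x : Sym2 V → ℝ} (hx : IsLPLFeasible G ℓ (fun j C => (#((M j).filter (Crosses C)) : ℝ)) x)
    (S : Finset V) (R : ℕ) :
    ∑ j, ∑ q ∈ M j, (sepCount G S R q : ℝ) ≤ ∑ e ∈ G.edgeFinset, x e :=
  calc ∑ j, ∑ q ∈ M j, (sepCount G S R q : ℝ)
      = ∑ r ∈ range R, ∑ j, (#((M j).filter (Crosses (ballCut G S r))) : ℝ) := by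
        rw [sum_comm]
        refine sum_congr rfl fun j _ => ?_
        exact_mod_cast (sum_card_bipartiteAbove_eq_sum_card_bipartiteBelow
          (fun r q => Crosses (ballCut G S r) q)).symm
    _ ≤ ∑ r ∈ range R, ∑ e ∈ cutEdges G (ballCut G S r), x e :=
        sum_le_sum fun r _ => hx.sum_card_filter_crosses_le _
    _ = ∑ e ∈ G.edgeFinset, sepCount G S R e * x e := by
        simp only [sepCount, cutEdges, ← nsmul_eq_mul, ← sum_const]
        exact sum_comm' fun r e => by simp only [mem_filter]; tauto
    _ ≤ ∑ e ∈ G.edgeFinset, x e := by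
        refine sum_le_sum fun e he => ?_
        have : (sepCount G S R e : ℝ) ≤ 1 := by exact_mod_cast sepCount_le_one hG S R he
        nlinarith [hx.1 e, (Nat.cast_nonneg _ : (0 : ℝ) ≤ sepCount G S R e)]

end RandomBallCuts

section Multiscale

variable {G : SimpleGraph V} {T : Finset V} {a b : V}

noncomputable def growthRadius (G : SimpleGraph V) (T : Finset V) (a b : V) (n : ℕ) : ℕ :=
  sInf {r | n ≤ #(terminalBall G T a r) ∧ n ≤ #(terminalBall G T b r)}

theorem growthRadius_spec {n : ℕ} (hn : n ≤ #T) :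
    n ≤ #(terminalBall G T a (growthRadius G T a b n)) ∧
      n ≤ #(terminalBall G T b (growthRadius G T a b n)) := by
  refine Nat.sInf_mem (s := {r | n ≤ #(terminalBall G T a r) ∧ n ≤ #(terminalBall G T b r)})
    ⟨T.sup fun t => G.dist a t + G.dist b t, ?_, ?_⟩ <;>
  · rw [terminalBall, filter_true_of_mem fun t ht => ?_]
    · exact hn
    · have := le_sup (f := fun t => G.dist a t + G.dist b t) ht
      omega

theorem growthRadius_mono {n n' : ℕ} (h : n ≤ n') (hn' : n' ≤ #T) :
    growthRadius G T a b n ≤ growthRadius G T a b n' :=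
  Nat.sInf_le ⟨h.trans (growthRadius_spec hn').1, h.trans (growthRadius_spec hn').2⟩

theorem card_terminalBall_lt_of_lt_growthRadius {n r : ℕ} (h : r < growthRadius G T a b n) :
    #(terminalBall G T a r) < n ∨ #(terminalBall G T b r) < n := by
  have := Nat.notMem_of_lt_sInf h
  simp only [Set.mem_ofPred_eq, not_and_or, not_le] at this
  exact this

theorem self_mem_terminalBall (ha : a ∈ T) (ρ : ℕ) : a ∈ terminalBall G T a ρ :=
  mem_filter.2 ⟨ha, by simp⟩

theorem growthRadius_one (ha : a ∈ T) (hb : b ∈ T) : growthRadius G T a b 1 = 0 :=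
  Nat.sInf_eq_zero.2 <| Or.inl ⟨card_pos.2 ⟨a, self_mem_terminalBall ha 0⟩,
    card_pos.2 ⟨b, self_mem_terminalBall hb 0⟩⟩

theorem dist_le_growthRadius_card (hb : b ∈ T) : G.dist a b ≤ growthRadius G T a b #T := by
  by_contra! h
  have hlt : #(terminalBall G T a (growthRadius G T a b #T)) < #T :=
    card_lt_card (filter_ssubset.2 ⟨b, hb, not_le.2 h⟩)
  exact absurd (growthRadius_spec le_rfl).1 (not_le.2 hlt)

theorem growth_step_le_expectedSep (hG : G.Connected) {cap R i : ℕ}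
    (hcap : 2 * cap ≤ G.dist a b) (hR : cap ≤ R) :
    (((min (growthRadius G T a b (min (2 ^ (i + 1)) #T)) cap : ℕ) : ℝ) -
      (min (growthRadius G T a b (min (2 ^ i) #T)) cap : ℕ)) / 10 ≤
      expectedSep G T (levelProb i) R s(a, b) := by
  set n := min (2 ^ i) #T
  set n' := min (2 ^ (i + 1)) #T
  have hpow : 2 ^ i ≤ 2 ^ (i + 1) := Nat.pow_le_pow_right two_pos i.le_succ
  have hnn' : n ≤ n' := min_le_min_right _ hpow
  set ρ' := min (growthRadius G T a b n) cap
  set ρ := min (growthRadius G T a b n') cap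
  by_cases hle : ρ ≤ ρ'
  · have : (ρ : ℝ) ≤ ρ' := by exact_mod_cast hle
    linarith [expectedSep_nonneg (G := G) (T := T) (R := R) (e := s(a, b))
      (levelProb_nonneg i) (levelProb_le_one i)]
  push Not at hle
  have hρ'eq : ρ' = growthRadius G T a b n := by omega
  have hn : n = 2 ^ i := by
    by_contra hn
    have : n' ≤ n := by omega
    have := growthRadius_mono (G := G) (a := a) (b := b) this (min_le_right _ _)
    omega
  have hball : 2 ^ i ≤ #(terminalBall G T a ρ') ∧ 2 ^ i ≤ #(terminalBall G T b ρ') :=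
    hn ▸ hρ'eq ▸ growthRadius_spec (min_le_right _ _)
  have hdist : ρ' + ρ ≤ G.dist a b := by omega
  rcases card_terminalBall_lt_of_lt_growthRadius (G := G) (T := T) (a := a) (b := b)
    (show ρ - 1 < growthRadius G T a b n' by omega) with hsmall | hsmall
  · rw [Sym2.eq_swap]
    exact le_expectedSep_levelProb hG hle (dist_comm (G := G) ▸ hdist) (by omega) hball.2
      (hsmall.trans_le (min_le_left _ _))
  · exact le_expectedSep_levelProb hG hle hdist (by omega) hball.1
      (hsmall.trans_le (min_le_left _ _))

theorem dist_le_expectedSep (hG : G.Connected) (ha : a ∈ T) (hb : b ∈ T) (hab : a ≠ b)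
    {I R : ℕ} (hTI : #T ≤ 2 ^ I) (hR : G.dist a b ≤ R) :
    (G.dist a b : ℝ) ≤ 30 * ∑ i ∈ range I, expectedSep G T (levelProb i) R s(a, b) := by
  set d := G.dist a b
  set cap := d / 2
  set ρ : ℕ → ℕ := fun j => min (growthRadius G T a b (min (2 ^ j) #T)) cap
  have hd : 1 ≤ d := hG.pos_dist_of_ne hab
  have hT : 2 ≤ #T := one_lt_card.2 ⟨a, ha, b, hb, hab⟩
  have hI : 0 < I := Nat.pos_of_ne_zero fun h => by simp [h] at hTI; omega
  have hρ0 : ρ 0 = 0 := by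
    simp only [ρ, pow_zero, min_eq_left (by omega : 1 ≤ #T), growthRadius_one ha hb, zero_min]
  have hρI : ρ I = cap := by
    simp only [ρ, min_eq_right hTI]
    exact min_eq_right ((Nat.div_le_self d 2).trans (dist_le_growthRadius_card hb))
  have hsteps : (cap : ℝ) / 10 ≤ ∑ i ∈ range I, expectedSep G T (levelProb i) R s(a, b) := by
    have htel := sum_range_sub (fun j => (ρ j : ℝ)) I
    rw [hρI, hρ0, Nat.cast_zero, sub_zero] at htel
    rw [← htel, sum_div]
    exact sum_le_sum fun i _ => growth_step_le_expectedSep hG (by omega) (by omega)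
  have hfirst : (1 : ℝ) / 10 ≤ expectedSep G T (levelProb 0) R s(a, b) := by
    have hsingle : #(terminalBall G T b 0) < 2 := by
      refine (card_le_one.2 fun s hs t ht => ?_).trans_lt one_lt_two
      simp only [terminalBall, mem_filter, nonpos_iff_eq_zero, hG.dist_eq_zero_iff] at hs ht
      exact hs.2.symm.trans ht.2
    simpa using le_expectedSep_levelProb hG zero_lt_one hd (hd.trans hR)
      (card_pos.2 ⟨a, self_mem_terminalBall ha 0⟩) hsingle
  have hfirst' := hfirst.trans <| single_le_sum
    (f := fun i => expectedSep G T (levelProb i) R s(a, b))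
    (fun i _ => expectedSep_nonneg (levelProb_nonneg i) (levelProb_le_one i)) (mem_range.2 hI)
  have hdcap : (d : ℝ) ≤ 2 * cap + 1 := by exact_mod_cast (by omega : d ≤ 2 * cap + 1)
  linarith

end Multiscale

section LowerBound

variable {G : SimpleGraph V} {ℓ : ℕ} {K : Fin ℓ → Finset V} {M : Fin ℓ → Finset (Sym2 V)}
  {x : Sym2 V → ℝ}

theorem sum_expectedSep_le (hG : G.Connected)
    (hx : IsLPLFeasible G ℓ (fun j C => (#((M j).filter (Crosses C)) : ℝ)) x)
    (T : Finset V) {p : ℝ} (hp₀ : 0 ≤ p) (hp₁ : p ≤ 1) (R : ℕ) :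
    ∑ j, ∑ q ∈ M j, expectedSep G T p R q ≤ ∑ e ∈ G.edgeFinset, x e :=
  calc ∑ j, ∑ q ∈ M j, expectedSep G T p R q
      = ∑ S ∈ T.powerset, bernoulliWeight T p S * ∑ j, ∑ q ∈ M j, (sepCount G S R q : ℝ) := by
        simp only [expectedSep, mul_sum]
        rw [sum_comm]
        exact sum_congr rfl fun j _ => sum_comm
    _ ≤ ∑ S ∈ T.powerset, bernoulliWeight T p S * ∑ e ∈ G.edgeFinset, x e :=
        sum_le_sum fun S _ => mul_le_mul_of_nonneg_left (sum_sepCount_le hG hx S R)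
          (bernoulliWeight_nonneg hp₀ hp₁ S)
    _ = ∑ e ∈ G.edgeFinset, x e := by rw [← sum_mul, sum_bernoulliWeight, one_mul]

theorem natLog_add_one_le_two_mul_logb {k : ℕ} (hk : 2 ≤ k) :
    ((Nat.log 2 k + 1 : ℕ) : ℝ) ≤ 2 * Real.logb 2 k := by
  have hlog := Real.natLog_le_logb k 2
  have hone : 1 ≤ Real.logb 2 k := by
    rw [Real.le_logb_iff_rpow_le one_lt_two (by positivity), Real.rpow_one]
    exact_mod_cast hk
  push_cast at hlog ⊢
  linarith

theorem sum_matchCost_le (hG : G.Connected) (hM : ∀ i, IsPerfectMatchingOn (K i) (M i))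
    (hk : 2 ≤ ∑ i, #(K i))
    (hx : IsLPLFeasible G ℓ (fun j C => (#((M j).filter (Crosses C)) : ℝ)) x) :
    ∑ j, (matchCost G (M j) : ℝ) ≤
      60 * Real.logb 2 ((∑ i, #(K i) : ℕ) : ℝ) * ∑ e ∈ G.edgeFinset, x e := by
  set T := univ.biUnion K
  set I := Nat.log 2 (∑ i, #(K i)) + 1
  set R := univ.sup fun q : V × V => G.dist q.1 q.2
  have hX : 0 ≤ ∑ e ∈ G.edgeFinset, x e := sum_nonneg fun e _ => hx.1 e
  have hTI : #T ≤ 2 ^ I := card_biUnion_le.trans (Nat.lt_pow_succ_log_self one_lt_two _).le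
  have hpair : ∀ j, ∀ q ∈ M j,
      ((Sym2.lift ⟨fun u v => G.dist u v, fun _ _ => dist_comm⟩ q : ℕ) : ℝ) ≤
        30 * ∑ i ∈ range I, expectedSep G T (levelProb i) R q := by
    intro j q hq
    induction q using Sym2.ind with
    | _ a b =>
    have hT : ∀ v ∈ s(a, b), v ∈ T := fun v hv =>
      mem_biUnion.2 ⟨j, mem_univ j, (hM j).2.2 _ hq v hv⟩
    exact dist_le_expectedSep hG (hT a (Sym2.mem_mk_left a b)) (hT b (Sym2.mem_mk_right a b))
      (fun h => (hM j).1 _ hq (h ▸ Sym2.mk_isDiag_iff.2 rfl)) hTI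
      (le_sup (f := fun q : V × V => G.dist q.1 q.2) (mem_univ (a, b)))
  calc ∑ j, (matchCost G (M j) : ℝ)
      ≤ ∑ j, ∑ q ∈ M j, 30 * ∑ i ∈ range I, expectedSep G T (levelProb i) R q := by
        simp only [matchCost, Nat.cast_sum]
        exact sum_le_sum fun j _ => sum_le_sum fun q hq => hpair j q hq
    _ = 30 * ∑ i ∈ range I, ∑ j, ∑ q ∈ M j, expectedSep G T (levelProb i) R q := by
        simp only [← mul_sum]
        rw [sum_comm]
        exact congrArg _ (sum_congr rfl fun i _ => sum_comm)
    _ ≤ 30 * ∑ _i ∈ range I, ∑ e ∈ G.edgeFinset, x e := by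
        gcongr with i
        exact sum_expectedSep_le hG hx T (levelProb_nonneg i) (levelProb_le_one i) R
    _ ≤ 60 * Real.logb 2 ((∑ i, #(K i) : ℕ) : ℝ) * ∑ e ∈ G.edgeFinset, x e := by
        rw [sum_const, card_range, nsmul_eq_mul]
        nlinarith [natLog_add_one_le_two_mul_logb hk]

end LowerBound

/-- There is an absolute constant `c > 0` such that for every finite connected
simple graph `G`, terminal sets `K₁,…,K_ℓ` of even size with `k = ∑|K_i| ≥ 2`, and perfect
matchings `M_i` of `K_i` with `d(G,M_i) ≥ σ_{K_i}(G)/2`, taking `b^j(C)` to be the number of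
pairs of `M_j` separated by `C`:
`c·(∑ σ_{K_i}(G))/log₂ k ≤ LP^L(G) ≤ LP^U(G) ≤ ∑ σ_{K_i}(G)`. -/
theorem statement10 :
    ∃ c : ℝ, 0 < c ∧
      ∀ (V : Type) [Fintype V] [DecidableEq V] (G : SimpleGraph V),
        G.Connected →
        ∀ (ℓ : ℕ) (K : Fin ℓ → Finset V) (M : Fin ℓ → Finset (Sym2 V)),
          (∀ i, Even (K i).card) →
          2 ≤ ∑ i, (K i).card →
          (∀ i, IsPerfectMatchingOn (K i) (M i)) →
          (∀ i, (sigmaK G (K i) : ℝ) / 2 ≤ (matchCost G (M i) : ℝ)) →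
          c * (∑ i, (sigmaK G (K i) : ℝ)) / Real.logb 2 ((∑ i, (K i).card : ℕ) : ℝ) ≤
              LPL G ℓ (fun j C => (((M j).filter (Crosses C)).card : ℝ)) ∧
          LPL G ℓ (fun j C => (((M j).filter (Crosses C)).card : ℝ)) ≤
              LPU G ℓ (fun j C => (((M j).filter (Crosses C)).card : ℝ)) ∧
          LPU G ℓ (fun j C => (((M j).filter (Crosses C)).card : ℝ)) ≤
              ∑ i, (sigmaK G (K i) : ℝ) := by
  refine ⟨1 / 120, by norm_num, fun V _ _ G hG ℓ K M _ hk hM hσ => ?_⟩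
  obtain ⟨xU, hxU, hvalU⟩ := exists_isLPUFeasible hG hM
  refine ⟨le_LPL hxU.sum fun x hx => ?_, LPL_le_LPU hxU, hvalU ▸ LPU_le hxU⟩
  have hcost := sum_matchCost_le hG hM hk hx
  have hσM : ∑ i, (sigmaK G (K i) : ℝ) ≤ 2 * ∑ j, (matchCost G (M j) : ℝ) := by
    rw [mul_sum]
    exact sum_le_sum fun i _ => by linarith [hσ i]
  have hlog : 0 < Real.logb 2 ((∑ i, (K i).card : ℕ) : ℝ) :=
    Real.logb_pos one_lt_two (by exact_mod_cast hk)
  rw [div_le_iff₀ hlog]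
  nlinarith
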